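/- Let F be a finite field with q elements, n ≥ 1, and x, y, z ∈ F^n. Then ed(x,z) ≤ ed(x,y) + ed(y,z), where ed(u,v) = log_q(binom(n, wt(u−v))·(q-1)^{wt(u−v)}). -/

import Mathlib

/-!
Every vector of weight `wt (u + v)` is the image of `u + v` under a monomial map (a coordinate
permutation followed by nonzero coordinate scalings), which preserves Hamming weight and is
additive. Hence every such vector splits as a sum of a vector of weight `wt u` and one of weight
`wt v`, so the Hamming sphere of radius `wt (u + v)` is at most as large as the product of the
spheres of radii `wt u` and `wt v`. The sphere of radius `k` has `binom(n, k) (q - 1)^k` points,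
and taking `log_q` with `u = y - x`, `v = z - y` gives the triangle inequality.
-/

open Finset

section

variable {ι : Type*} [Fintype ι]

theorem Equiv.Perm.exists_iff_apply_of_card_filter_eq (p q : ι → Prop) [DecidablePred p]
    [DecidablePred q] (h : #{i | p i} = #{i | q i}) : ∃ π : Equiv.Perm ι, ∀ i, p i ↔ q (π i) := by
  have hpos : Fintype.card {i // p i} = Fintype.card {i // q i} := by
    simpa only [Fintype.card_subtype] using h
  have hneg : Fintype.card {i // ¬p i} = Fintype.card {i // ¬q i} := by
    rw [Fintype.card_subtype_compl, Fintype.card_subtype_compl, hpos]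
  refine ⟨Equiv.subtypeCongr (Fintype.equivOfCardEq hpos) (Fintype.equivOfCardEq hneg),
    fun i => ?_⟩
  by_cases hi : p i
  · simp [Equiv.subtypeCongr, hi, ((Fintype.equivOfCardEq hpos) ⟨i, hi⟩).2]
  · simp [Equiv.subtypeCongr, hi, ((Fintype.equivOfCardEq hneg) ⟨i, hi⟩).2]

variable {F : Type*} [DecidableEq F]

theorem hammingNorm_comp_perm [Zero F] (u : ι → F) (π : Equiv.Perm ι) :
    hammingNorm (u ∘ π) = hammingNorm u :=
  card_equiv π (by simp)

theorem hammingNorm_mul_comp_perm [MulZeroClass F] [IsLeftCancelMulZero F] {s : ι → F}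
    (hs : ∀ i, s i ≠ 0) (π : Equiv.Perm ι) (u : ι → F) :
    hammingNorm (fun i => s i * u (π i)) = hammingNorm u := by
  rw [hammingNorm_comp (fun i c => s i * c) (fun i => mul_right_injective₀ (hs i))
    (fun i => mul_zero _)]
  exact hammingNorm_comp_perm u π

theorem exists_mul_comp_perm_eq_of_hammingNorm_eq [GroupWithZero F] {w₀ w : ι → F}
    (h : hammingNorm w₀ = hammingNorm w) :
    ∃ (s : ι → F) (π : Equiv.Perm ι), (∀ i, s i ≠ 0) ∧ ∀ i, s i * w₀ (π i) = w i := by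
  obtain ⟨π, hπ⟩ :=
    Equiv.Perm.exists_iff_apply_of_card_filter_eq (fun i => w i ≠ 0) (fun i => w₀ i ≠ 0) h.symm
  refine ⟨fun i => if w i = 0 then 1 else w i / w₀ (π i), π, fun i => ?_, fun i => ?_⟩
  · by_cases hi : w i = 0
    · simp [hi]
    · simpa [hi] using (hπ i).1 hi
  · by_cases hi : w i = 0
    · have hw₀ : w₀ (π i) = 0 := by simpa [hi] using hπ i
      simp [hi, hw₀]
    · simp [hi, div_mul_cancel₀ _ ((hπ i).1 hi)]

variable [DecidableEq ι] [Fintype F]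

theorem card_filter_support_eq [Zero F] (s : Finset ι) :
    #{w : ι → F | ({i | w i ≠ 0} : Finset ι) = s} = (Fintype.card F - 1) ^ #s := by
  have hpi : ({w : ι → F | ({i | w i ≠ 0} : Finset ι) = s} : Finset (ι → F)) =
      Fintype.piFinset fun i => if i ∈ s then {0}ᶜ else {0} := by
    ext w
    simp only [mem_filter, mem_univ, true_and, Fintype.mem_piFinset, Finset.ext_iff]
    refine forall_congr' fun i => ?_
    by_cases hi : i ∈ s <;> simp [hi]
  rw [hpi, Fintype.card_piFinset]
  simp [apply_ite card, card_compl, prod_ite_mem]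

theorem card_hammingNorm_eq [Zero F] (k : ℕ) :
    #{w : ι → F | hammingNorm w = k} = (Fintype.card ι).choose k * (Fintype.card F - 1) ^ k := by
  rw [card_eq_sum_card_fiberwise (f := fun w : ι → F => ({i | w i ≠ 0} : Finset ι))
    (t := powersetCard k univ) (fun w hw => by simpa [hammingNorm] using hw)]
  rw [sum_congr rfl fun s hs => ?_, sum_const, card_powersetCard, card_univ, smul_eq_mul]
  rw [mem_powersetCard_univ] at hs
  rw [filter_filter, ← hs, ← card_filter_support_eq s]
  congr 1
  ext w
  simp only [mem_filter, mem_univ, true_and, hammingNorm, and_iff_right_iff_imp]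
  exact congrArg card

theorem card_hammingNorm_add_le [DivisionRing F] (u v : ι → F) :
    #{w : ι → F | hammingNorm w = hammingNorm (u + v)} ≤
      #{w : ι → F | hammingNorm w = hammingNorm u} *
        #{w : ι → F | hammingNorm w = hammingNorm v} := by
  have hsplit : ∀ w : ι → F, hammingNorm w = hammingNorm (u + v) → ∃ p : (ι → F) × (ι → F),
      hammingNorm p.1 = hammingNorm u ∧ hammingNorm p.2 = hammingNorm v ∧ p.1 + p.2 = w := by
    intro w hw
    obtain ⟨s, π, hs, hsw⟩ := exists_mul_comp_perm_eq_of_hammingNorm_eq hw.symm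
    refine ⟨(fun i => s i * u (π i), fun i => s i * v (π i)), hammingNorm_mul_comp_perm hs π u,
      hammingNorm_mul_comp_perm hs π v, funext fun i => ?_⟩
    simp only [Pi.add_apply, ← mul_add, ← hsw]
  choose! g hg₁ hg₂ hg₃ using hsplit
  rw [← card_product]
  refine card_le_card_of_injOn g (fun w hw => ?_) (fun w₁ hw₁ w₂ hw₂ hg => ?_)
  · simp_all
  · simp only [coe_filter, mem_univ, true_and, Set.mem_ofPred_eq] at hw₁ hw₂
    rw [← hg₃ w₁ hw₁, ← hg₃ w₂ hw₂, hg]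

theorem choose_mul_pow_hammingDist_le [DivisionRing F] (x y z : ι → F) :
    (Fintype.card ι).choose (hammingDist x z) * (Fintype.card F - 1) ^ hammingDist x z ≤
      (Fintype.card ι).choose (hammingDist x y) * (Fintype.card F - 1) ^ hammingDist x y *
        ((Fintype.card ι).choose (hammingDist y z) * (Fintype.card F - 1) ^ hammingDist y z) := by
  have h := card_hammingNorm_add_le (y - x) (z - y)
  rw [sub_add_sub_cancel', card_hammingNorm_eq, card_hammingNorm_eq, card_hammingNorm_eq] at h
  simpa only [hammingDist_eq_hammingNorm, neg_add_eq_sub] using h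

end

theorem entropy_distance_triangle_inequality_general
    (F : Type*) [Field F] [Fintype F] [DecidableEq F] (q n : ℕ)
    (hq : Fintype.card F = q) (x y z : Fin n → F) :
    Real.logb q ((n.choose (hammingDist x z) * (q - 1) ^ hammingDist x z : ℕ) : ℝ) ≤
      Real.logb q ((n.choose (hammingDist x y) * (q - 1) ^ hammingDist x y : ℕ) : ℝ) +
      Real.logb q ((n.choose (hammingDist y z) * (q - 1) ^ hammingDist y z : ℕ) : ℝ) := by
  subst hq
  have hq : 1 < Fintype.card F := Fintype.one_lt_card
  have hpos (u v : Fin n → F) :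
      0 < n.choose (hammingDist u v) * (Fintype.card F - 1) ^ hammingDist u v :=
    Nat.mul_pos (Nat.choose_pos (by simpa using hammingDist_le_card_fintype (x := u) (y := v)))
      (Nat.pow_pos (by omega))
  have hle := choose_mul_pow_hammingDist_le x y z
  rw [Fintype.card_fin] at hle
  rw [← Real.logb_mul (by exact_mod_cast (hpos x y).ne') (by exact_mod_cast (hpos y z).ne'),
    ← Nat.cast_mul]
  exact Real.logb_le_logb_of_le (by exact_mod_cast hq) (by exact_mod_cast hpos x z)
    (by exact_mod_cast hle)

/-- Let `F` be a finite field with `q` elements, `n ≥ 1`, and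
`x, y, z ∈ F^n`. Then `ed(x,z) ≤ ed(x,y) + ed(y,z)`, where
`ed(u,v) = log_q(binom(n, wt(u−v))·(q-1)^{wt(u−v)})` (triangle inequality for the
entropy distance; note `wt(u−v)` is the Hamming distance between `u` and `v`). -/
theorem entropy_distance_triangle_inequality
    (F : Type*) [Field F] [Fintype F] [DecidableEq F] (q n : ℕ)
    (hq : Fintype.card F = q) (hn : 1 ≤ n) (x y z : Fin n → F) :
    Real.logb q ((n.choose (hammingDist x z) * (q - 1) ^ hammingDist x z : ℕ) : ℝ) ≤
      Real.logb q ((n.choose (hammingDist x y) * (q - 1) ^ hammingDist x y : ℕ) : ℝ) +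
      Real.logb q ((n.choose (hammingDist y z) * (q - 1) ^ hammingDist y z : ℕ) : ℝ) :=
  entropy_distance_triangle_inequality_general F q n hq x y z
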